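/- Suppose μ_n, μ̄, μ̂ are probability measures with μ_n(dθ) density updates of the form dμ_{n+1}/dμ_n = h_{μ_n}/μ_n(h_{μ_n}) with h positive, and suppose there exist δ > 1, n_0 ∈ ℕ and a measurable set B with μ_{n_0}(B) > 0 such that for all θ ∈ B and all m ≥ n_0, h_{μ_m}(θ) > δ·μ_m(h_{μ_m}). Then μ_m(B) ≥ δ^{m−n_0} μ_{n_0}(B) for all m ≥ n_0, contradicting μ_m(B) ≤ 1 for m large; hence no such set B can exist. -/
import Mathlib


open MeasureTheory

theorem mass_amplification_contradiction {Θ : Type*} [MeasurableSpace Θ]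
    (μ : ℕ → Measure Θ) (hprob : ∀ n, IsProbabilityMeasure (μ n))
    (H : ℕ → Θ → ℝ) (hHmeas : ∀ n, Measurable (H n))
    (hHpos : ∀ n θ, 0 < H n θ)
    (hHint : ∀ n, Integrable (H n) (μ n))
    (hupd : ∀ n, μ (n + 1) = (μ n).withDensity
        (fun θ => ENNReal.ofReal (H n θ / ∫ θ', H n θ' ∂(μ n))))
    (B : Set Θ) (hB : MeasurableSet B)
    (δ : ℝ) (hδ : 1 < δ) (n₀ : ℕ) (hBn₀ : 0 < (μ n₀ B).toReal)
    (hamp : ∀ θ ∈ B, ∀ m, n₀ ≤ m → δ * ∫ θ', H m θ' ∂(μ m) < H m θ) :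
    (∀ m, n₀ ≤ m → δ ^ (m - n₀) * (μ n₀ B).toReal ≤ (μ m B).toReal)
    ∧ False := by
  have hδ0 : (0:ℝ) < δ := lt_trans one_pos hδ
  -- one-step amplification
  have step : ∀ m, n₀ ≤ m → δ * (μ m B).toReal ≤ (μ (m+1) B).toReal := by
    intro m hm
    have hcpos : 0 < ∫ θ', H m θ' ∂(μ m) := by
      have := hprob m
      exact integral_pos_iff_support_of_nonneg (fun θ => (hHpos m θ).le) (hHint m) |>.2
        (by
          have : Function.support (H m) = Set.univ := by
            ext θ; simp [Function.support, (hHpos m θ).ne']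
          rw [this]
          simp [Measure.measure_univ_pos.2 (IsProbabilityMeasure.ne_zero (μ m))])
    have key : (ENNReal.ofReal δ) * μ m B ≤ μ (m+1) B := by
      rw [hupd m, withDensity_apply _ hB]
      calc ENNReal.ofReal δ * μ m B
          = ∫⁻ _ in B, ENNReal.ofReal δ ∂(μ m) := by
            rw [MeasureTheory.setLIntegral_const, mul_comm]
        _ ≤ ∫⁻ θ in B, ENNReal.ofReal (H m θ / ∫ θ', H m θ' ∂(μ m)) ∂(μ m) := by
            apply setLIntegral_mono (by fun_prop)
            intro θ hθ
            apply ENNReal.ofReal_le_ofReal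
            rw [le_div_iff₀ hcpos]
            exact (hamp θ hθ m hm).le
    have hfin : μ (m+1) B ≠ ⊤ := (measure_ne_top _ _)
    have hfin' : μ m B ≠ ⊤ := (measure_ne_top _ _)
    have := ENNReal.toReal_mono hfin key
    rwa [ENNReal.toReal_mul, ENNReal.toReal_ofReal hδ0.le] at this
  have main : ∀ m, n₀ ≤ m → δ ^ (m - n₀) * (μ n₀ B).toReal ≤ (μ m B).toReal := by
    intro m hm
    obtain ⟨k, rfl⟩ := Nat.exists_eq_add_of_le hm
    induction k with
    | zero => simp
    | succ k ih =>
      have hk : n₀ ≤ n₀ + k := Nat.le_add_right _ _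
      have h1 := ih hk
      have h2 := step (n₀ + k) hk
      have : δ ^ (n₀ + (k+1) - n₀) * (μ n₀ B).toReal
          = δ * (δ ^ (n₀ + k - n₀) * (μ n₀ B).toReal) := by
        rw [Nat.add_sub_cancel_left, Nat.add_sub_cancel_left, pow_succ]
        ring
      rw [this, show n₀ + (k+1) = (n₀ + k) + 1 from rfl]
      calc δ * (δ ^ (n₀ + k - n₀) * (μ n₀ B).toReal)
          ≤ δ * (μ (n₀ + k) B).toReal := by
            exact mul_le_mul_of_nonneg_left h1 hδ0.le
        _ ≤ (μ (n₀ + k + 1) B).toReal := h2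
  refine ⟨main, ?_⟩
  obtain ⟨k, hk⟩ := pow_unbounded_of_one_lt ((μ n₀ B).toReal)⁻¹ hδ
  have h1 := main (n₀ + k) (Nat.le_add_right _ _)
  rw [Nat.add_sub_cancel_left] at h1
  have h2 : ((μ (n₀ + k)) B).toReal ≤ 1 := by
    have := hprob (n₀ + k)
    have : μ (n₀ + k) B ≤ 1 := prob_le_one
    simpa using ENNReal.toReal_mono (by simp) this
  have : ((μ n₀ B).toReal)⁻¹ * (μ n₀ B).toReal < δ ^ k * (μ n₀ B).toReal :=
    mul_lt_mul_of_pos_right hk hBn₀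
  rw [inv_mul_cancel₀ hBn₀.ne'] at this
  linarith
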